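/- arXiv:2108.13377 — 3 statements merged into one kernel-verified Lean document; each statement's English description precedes it below -/
import Mathlib

section
/- Let f : [0,∞) → ℝ be C^{n+2} with ∂_x^j f(0) = 0 for 0 ≤ j ≤ n+1. Then for all R > 0, the n-th derivative of f̃(x) = f(x)/x² satisfies ∂_x^n f̃(R) = R^{-(n+2)} ∫_0^R ∫_0^r (r')^n ∂_x^{n+2} f(r') dr' dr, and hence |∂_x^n f̃(R)| ≤ C sup_{0 ≤ x ≤ R} |∂_x^{n+2} f(x)| for a constant C depending only on n. -/
/-!
Write `D = d/dx` and `T_n f = x^{n+2} D^n (f / x²)`. Since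
`D (x^{-(n+2)} h) = x^{-(n+3)} (x D - (n+2)) h`, the `T_n` obey the recursion
`T_{n+1} = (x D - (n+2)) T_n`, which makes sense for every `f` on all of `ℝ`, not only on `x > 0`.
From `D² (x D - c) = (x D + 2 - c) D²` one gets by induction `D² T_n f = x^n D^{n+2} f`, and
`T_n f` and `D T_n f` vanish at `0` as soon as `f` and `D f` do. Taylor's formula with integral
remainder for `T_n f` at `0` is then the representation, and the bound follows with `C = 1`.
-/

open MeasureTheory intervalIntegral Set
open scoped Interval

/-- The function `T_n f` above, defined on all of `ℝ` through its recursion. -/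
noncomputable def rescaledDeriv (f : ℝ → ℝ) : ℕ → ℝ → ℝ
  | 0 => f
  | n + 1 => fun x => x * deriv (rescaledDeriv f n) x - (n + 2) * rescaledDeriv f n x

section

variable {f : ℝ → ℝ}

lemma differentiableAt_iteratedDeriv_div_sq {n : ℕ} (hf : ContDiff ℝ (n + 1) f) {x : ℝ}
    (hx : x ≠ 0) : DifferentiableAt ℝ (iteratedDeriv n (fun y => f y / y ^ 2)) x := by
  have hs : IsOpen ({0}ᶜ : Set ℝ) := isOpen_compl_singleton
  have hg : ContDiffOn ℝ (n + 1) (fun y => f y / y ^ 2) {0}ᶜ :=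
    hf.contDiffOn.div (contDiffOn_id.pow 2) fun y hy => pow_ne_zero 2 hy
  have hd := (hg.differentiableOn_iteratedDerivWithin (mod_cast n.lt_succ_self)
    hs.uniqueDiffOn) x hx
  refine (hd.differentiableAt (hs.mem_nhds hx)).congr_of_eventuallyEq ?_
  filter_upwards [hs.mem_nhds hx] with y hy
  exact (iteratedDerivWithin_of_isOpen hs hy).symm

lemma rescaledDeriv_eq_of_pos {n : ℕ} (hf : ContDiff ℝ n f) {x : ℝ} (hx : 0 < x) :
    rescaledDeriv f n x = x ^ (n + 2) * iteratedDeriv n (fun y => f y / y ^ 2) x := by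
  induction n generalizing x with
  | zero => simp only [rescaledDeriv, iteratedDeriv_zero]; field_simp
  | succ n ih =>
    have hloc : rescaledDeriv f n =ᶠ[nhds x]
        fun y => y ^ (n + 2) * iteratedDeriv n (fun y => f y / y ^ 2) y := by
      filter_upwards [Ioi_mem_nhds hx] with y hy
      exact ih (hf.of_le (by norm_cast; omega)) hy
    have hderiv := (hasDerivAt_pow (n + 2) x).fun_mul
      (differentiableAt_iteratedDeriv_div_sq (by exact_mod_cast hf) hx.ne').hasDerivAt
    simp only [rescaledDeriv]
    rw [hloc.deriv_eq, hderiv.deriv, hloc.eq_of_nhds, iteratedDeriv_succ]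
    push_cast
    ring

lemma contDiff_rescaledDeriv {m n : ℕ} (hf : ContDiff ℝ (m + n : ℕ) f) :
    ContDiff ℝ m (rescaledDeriv f n) := by
  induction n generalizing m with
  | zero => simpa [rescaledDeriv] using hf
  | succ n ih =>
    have h := ih (m := m + 1) (by simpa [add_assoc, add_comm 1] using hf)
    exact (contDiff_id.mul h.deriv').sub (contDiff_const.mul (h.of_le (by norm_cast; omega)))

lemma deriv_rescaledDeriv_succ {n : ℕ} (hS : ContDiff ℝ 2 (rescaledDeriv f n)) (x : ℝ) :
    deriv (rescaledDeriv f (n + 1)) x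
      = x * deriv (deriv (rescaledDeriv f n)) x - (n + 1) * deriv (rescaledDeriv f n) x := by
  have h1 : Differentiable ℝ (rescaledDeriv f n) := hS.differentiable (by norm_num)
  have h2 : Differentiable ℝ (deriv (rescaledDeriv f n)) :=
    (hS.deriv' (n := 1)).differentiable one_ne_zero
  have := ((hasDerivAt_id' x).fun_mul (h2 x).hasDerivAt).fun_sub
    ((h1 x).hasDerivAt.const_mul ((n : ℝ) + 2))
  simp only [rescaledDeriv]
  rw [this.deriv]
  simp only [one_mul]
  ring

lemma rescaledDeriv_apply_zero (h : f 0 = 0) (n : ℕ) : rescaledDeriv f n 0 = 0 := by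
  induction n with
  | zero => exact h
  | succ n ih => simp [rescaledDeriv, ih]

lemma deriv_rescaledDeriv_zero {n : ℕ} (hf : ContDiff ℝ (n + 1) f) (h : deriv f 0 = 0) :
    deriv (rescaledDeriv f n) 0 = 0 := by
  induction n with
  | zero => exact h
  | succ n ih =>
    rw [deriv_rescaledDeriv_succ (contDiff_rescaledDeriv (hf.of_le (by norm_cast; omega))),
      ih (hf.of_le (by norm_cast; omega))]
    ring

lemma deriv_deriv_rescaledDeriv {n : ℕ} (hf : ContDiff ℝ (n + 2) f) :
    deriv (deriv (rescaledDeriv f n)) = fun x => x ^ n * iteratedDeriv (n + 2) f x := by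
  induction n with
  | zero => simp [rescaledDeriv, iteratedDeriv_succ]
  | succ n ih =>
    have ih := ih (hf.of_le (by norm_cast; omega))
    have hS : ContDiff ℝ 3 (rescaledDeriv f n) :=
      contDiff_rescaledDeriv (hf.of_le (by norm_cast; omega))
    have hS' : deriv (rescaledDeriv f (n + 1))
        = fun x => x ^ (n + 1) * iteratedDeriv (n + 2) f x
          - (n + 1) * deriv (rescaledDeriv f n) x := by
      ext x
      rw [deriv_rescaledDeriv_succ (hS.of_le (by norm_num)), ih]
      ring
    ext x
    have hF := (hf.differentiable_iteratedDeriv (n + 2) (by norm_cast; omega) x).hasDerivAt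
    have hD := ((hS.deriv' (n := 2)).differentiable (by norm_num) x).hasDerivAt
    rw [hS', ((hasDerivAt_pow (n + 1) x).fun_mul hF).fun_sub (hD.const_mul _) |>.deriv, ih,
      ← iteratedDeriv_succ]
    push_cast
    ring

end

lemma integral_integral_deriv_deriv {Q : ℝ → ℝ} (hQ : ContDiff ℝ 2 Q) (a b : ℝ) :
    ∫ r in a..b, ∫ s in a..r, deriv (deriv Q) s = Q b - Q a - (b - a) * deriv Q a := by
  have hQ' : ContDiff ℝ 1 (deriv Q) := hQ.deriv'
  have inner : ∀ r, ∫ s in a..r, deriv (deriv Q) s = deriv Q r - deriv Q a := fun r =>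
    integral_deriv_eq_sub (fun x _ => hQ'.differentiable one_ne_zero x)
      ((hQ'.continuous_deriv le_rfl).intervalIntegrable a r)
  simp only [inner]
  rw [integral_sub (hQ'.continuous.intervalIntegrable a b) intervalIntegrable_const,
    integral_deriv_eq_sub (fun x _ => hQ.differentiable two_ne_zero x)
      (hQ'.continuous.intervalIntegrable a b), intervalIntegral.integral_const, smul_eq_mul]

lemma abs_integral_integral_pow_mul_le {φ : ℝ → ℝ} {R M : ℝ} (n : ℕ) (hR : 0 ≤ R)
    (hM : ∀ x ∈ Icc 0 R, |φ x| ≤ M) :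
    |∫ r in (0:ℝ)..R, ∫ s in (0:ℝ)..r, s ^ n * φ s| ≤ R ^ (n + 2) * M := by
  have hM0 : 0 ≤ M := (abs_nonneg _).trans (hM 0 ⟨le_rfl, hR⟩)
  have inner : ∀ r ∈ Ι 0 R, ‖∫ s in (0:ℝ)..r, s ^ n * φ s‖ ≤ R ^ (n + 1) * M := by
    intro r hr
    rw [uIoc_of_le hR] at hr
    have hpt : ∀ s ∈ Ι 0 r, ‖s ^ n * φ s‖ ≤ R ^ n * M := by
      intro s hs
      rw [uIoc_of_le hr.1.le] at hs
      rw [norm_mul, norm_pow, Real.norm_of_nonneg hs.1.le, Real.norm_eq_abs]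
      exact mul_le_mul (pow_le_pow_left₀ hs.1.le (hs.2.trans hr.2) n)
        (hM s ⟨hs.1.le, hs.2.trans hr.2⟩) (abs_nonneg _) (pow_nonneg hR n)
    calc ‖∫ s in (0:ℝ)..r, s ^ n * φ s‖ ≤ R ^ n * M * |r - 0| :=
          norm_integral_le_of_norm_le_const hpt
      _ ≤ R ^ n * M * R := by
        rw [sub_zero, abs_of_pos hr.1]
        exact mul_le_mul_of_nonneg_left hr.2 (by positivity)
      _ = R ^ (n + 1) * M := by ring
  calc |∫ r in (0:ℝ)..R, ∫ s in (0:ℝ)..r, s ^ n * φ s| ≤ R ^ (n + 1) * M * |R - 0| :=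
        norm_integral_le_of_norm_le_const inner
    _ = R ^ (n + 2) * M := by rw [sub_zero, abs_of_nonneg hR]; ring

/-- For `f : [0,∞) → ℝ` of class `C^{n+2}` with `∂_x^j f(0) = 0` for `j ≤ n+1`,
the `n`-th derivative of `f̃(x) = f(x)/x²` has the integral representation
`∂_x^n f̃(R) = R^{-(n+2)} ∫_0^R ∫_0^r (r')^n ∂_x^{n+2} f(r') dr' dr`, and hence
`|∂_x^n f̃(R)| ≤ C sup_{0 ≤ x ≤ R} |∂_x^{n+2} f(x)|`. -/
theorem deriv_div_sq_repr (n : ℕ) (f : ℝ → ℝ)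
    (hf : ContDiff ℝ (n + 2) f)
    (h0 : ∀ j : ℕ, j ≤ n + 1 → iteratedDeriv j f 0 = 0) :
    ∃ C > 0, ∀ R : ℝ, 0 < R →
      (iteratedDeriv n (fun x => f x / x ^ 2) R
          = (R ^ (n + 2))⁻¹ *
            ∫ r in (0:ℝ)..R, ∫ r' in (0:ℝ)..r, r' ^ n * iteratedDeriv (n + 2) f r') ∧
      ∀ M : ℝ, (∀ x ∈ Set.Icc (0:ℝ) R, |iteratedDeriv (n + 2) f x| ≤ M) →
        |iteratedDeriv n (fun x => f x / x ^ 2) R| ≤ C * M := by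
  have hf0 : f 0 = 0 := by simpa using h0 0 (by omega)
  have hf1 : deriv f 0 = 0 := by simpa using h0 1 (by omega)
  have hQ : ContDiff ℝ 2 (rescaledDeriv f n) :=
    contDiff_rescaledDeriv (hf.of_le (by norm_cast; omega))
  refine ⟨1, one_pos, fun R hR => ?_⟩
  have key : iteratedDeriv n (fun x => f x / x ^ 2) R
      = (R ^ (n + 2))⁻¹ *
        ∫ r in (0:ℝ)..R, ∫ r' in (0:ℝ)..r, r' ^ n * iteratedDeriv (n + 2) f r' := by
    rw [← deriv_deriv_rescaledDeriv hf, integral_integral_deriv_deriv hQ,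
      rescaledDeriv_apply_zero hf0, deriv_rescaledDeriv_zero (hf.of_le (by norm_cast; omega)) hf1,
      rescaledDeriv_eq_of_pos (hf.of_le (by norm_cast; omega)) hR]
    field_simp
    ring
  refine ⟨key, fun M hM => ?_⟩
  rw [key, abs_mul, abs_inv, abs_pow, abs_of_pos hR, one_mul]
  calc _ ≤ (R ^ (n + 2))⁻¹ * (R ^ (n + 2) * M) :=
        mul_le_mul_of_nonneg_left (abs_integral_integral_pow_mul_le n hR.le hM) (by positivity)
    _ = M := by field_simp
end

section
/- Suppose on a region of the (u,v) plane the estimates (1/3) ≤ λ ≤ 1/2, |m(u,v)| ≤ C min{u^{-3}, r³ u^{-6}}, and (1/3)(v−u) ≤ r(u,v) ≤ (1/2)(v−u) hold, with u ranging over [1,v]. Then for every ε > 0 there exists v₀ > 1 such that for all v > v₀, ∫_1^v (m/r²)(u',v) du' < ε v^{-1}. -/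
open MeasureTheory intervalIntegral

/-- Under the a priori bounds `1/3 ≤ λ ≤ 1/2`, `|m| ≤ C min{u⁻³, r³u⁻⁶}` and
`(v−u)/3 ≤ r ≤ (v−u)/2` on `{1 ≤ u ≤ v}`, for every `ε > 0` there is `v₀ > 1`
such that `∫_1^v (m/r²)(u',v) du' < ε v⁻¹` for all `v > v₀`. -/
theorem mass_ratio_integral_small (C : ℝ) (hC : 0 ≤ C) (m r lam : ℝ → ℝ → ℝ)
    (hlam : ∀ u v : ℝ, 1 ≤ u → u ≤ v → 1/3 ≤ lam u v ∧ lam u v ≤ 1/2)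
    (hm : ∀ u v : ℝ, 1 ≤ u → u ≤ v →
      |m u v| ≤ C * min ((u ^ 3)⁻¹) ((r u v) ^ 3 * (u ^ 6)⁻¹))
    (hr : ∀ u v : ℝ, 1 ≤ u → u ≤ v → (v - u)/3 ≤ r u v ∧ r u v ≤ (v - u)/2) :
    ∀ ε > 0, ∃ v₀ > (1:ℝ), ∀ v > v₀,
      (∫ u' in (1:ℝ)..v, m u' v / (r u' v) ^ 2) < ε * v⁻¹ := by
  intro ε hε
  refine ⟨max 2 (22 * C / ε), lt_of_lt_of_le one_lt_two (le_max_left _ _), ?_⟩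
  intro v hv
  have hv2 : 2 < v := lt_of_le_of_lt (le_max_left _ _) hv
  have hvC : 22 * C / ε < v := lt_of_le_of_lt (le_max_right _ _) hv
  have hv0 : (0:ℝ) < v := by linarith
  have hεv : 22 * C < ε * v := by
    rw [div_lt_iff₀ hε] at hvC; linarith
  have hεpos : 0 < ε * v⁻¹ := by positivity
  by_cases hint : IntervalIntegrable (fun u' => m u' v / (r u' v) ^ 2) volume 1 v
  · -- integrable case
    have h1v2 : (1:ℝ) ≤ v/2 := by linarith
    have hv2v : v/2 ≤ v := by linarith
    have hsub1 : IntervalIntegrable (fun u' => m u' v / (r u' v) ^ 2) volume 1 (v/2) :=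
      hint.mono_set (Set.uIcc_subset_uIcc (Set.left_mem_uIcc)
        (Set.mem_uIcc.2 (Or.inl ⟨h1v2, hv2v⟩)))
    have hsub2 : IntervalIntegrable (fun u' => m u' v / (r u' v) ^ 2) volume (v/2) v :=
      hint.mono_set (Set.uIcc_subset_uIcc (Set.mem_uIcc.2 (Or.inl ⟨h1v2, hv2v⟩))
        Set.right_mem_uIcc)
    rw [← intervalIntegral.integral_add_adjacent_intervals hsub1 hsub2]
    -- integrability of bound functions
    have hbd1int : IntervalIntegrable (fun u : ℝ => 36 * C * v⁻¹ * v⁻¹ * (u^3)⁻¹)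
        volume 1 (v/2) := by
      apply ContinuousOn.intervalIntegrable
      apply ContinuousOn.mul continuousOn_const
      apply ContinuousOn.inv₀ (by fun_prop)
      intro x hx
      rw [Set.uIcc_of_le h1v2] at hx
      have : (1:ℝ) ≤ x := hx.1
      positivity
    have hbd2int : IntervalIntegrable (fun u : ℝ => 32 * C * (v^6)⁻¹ * (v - u))
        volume (v/2) v := by
      apply ContinuousOn.intervalIntegrable
      fun_prop
    -- pointwise bound on [1, v/2]
    have hpt1 : ∀ u ∈ Set.Icc (1:ℝ) (v/2),
        m u v / (r u v) ^ 2 ≤ 36 * C * v⁻¹ * v⁻¹ * (u^3)⁻¹ := by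
      intro u hu
      have hu1 : 1 ≤ u := hu.1
      have huv : u ≤ v := by linarith [hu.2]
      have hR := hr u v hu1 huv
      have hRv : v/6 ≤ r u v := by linarith [hu.2, hR.1]
      have hRpos : 0 < r u v := by linarith
      have hmle : |m u v| ≤ C * (u^3)⁻¹ :=
        (hm u v hu1 huv).trans (mul_le_mul_of_nonneg_left (min_le_left _ _) hC)
      have h1 : m u v / (r u v) ^ 2 ≤ (C * (u^3)⁻¹) / (r u v) ^ 2 := by
        gcongr
        exact (le_abs_self _).trans hmle
      refine h1.trans ?_
      have h2 : (C * (u^3)⁻¹) / (r u v) ^ 2 ≤ (C * (u^3)⁻¹) / ((v/6) ^ 2) := by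
        gcongr
      refine h2.trans (le_of_eq ?_)
      field_simp
      ring
    -- pointwise bound on [v/2, v]
    have hpt2 : ∀ u ∈ Set.Icc (v/2) v,
        m u v / (r u v) ^ 2 ≤ 32 * C * (v^6)⁻¹ * (v - u) := by
      intro u hu
      have hu1 : 1 ≤ u := by linarith [hu.1]
      have huv : u ≤ v := hu.2
      have hR := hr u v hu1 huv
      have hu0 : 0 < u := by linarith
      rcases eq_or_lt_of_le huv with heq | hlt
      · -- u = v : r = 0
        have hR0 : r u v = 0 := le_antisymm (by rw [heq] at hR ⊢; linarith [hR.2])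
          (by linarith [hR.1, heq])
        rw [hR0]
        simp [heq]
      · have hRpos : 0 < r u v := by linarith [hR.1]
        have hmle : |m u v| ≤ C * ((r u v)^3 * (u^6)⁻¹) :=
          (hm u v hu1 huv).trans (mul_le_mul_of_nonneg_left (min_le_right _ _) hC)
        have h1 : m u v / (r u v) ^ 2 ≤ (C * ((r u v)^3 * (u^6)⁻¹)) / (r u v) ^ 2 := by
          gcongr
          exact (le_abs_self _).trans hmle
        refine h1.trans ?_
        have hRne : r u v ≠ 0 := ne_of_gt hRpos
        have heq2 : (C * ((r u v)^3 * (u^6)⁻¹)) / (r u v) ^ 2 = C * (r u v) * (u^6)⁻¹ := by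
          field_simp
        rw [heq2]
        have h64 : (u^6)⁻¹ ≤ 64 * (v^6)⁻¹ := by
          have hv2u : v ≤ 2 * u := by linarith [hu.1]
          have h6 : v^6 ≤ (2*u)^6 := pow_le_pow_left₀ (by linarith) hv2u 6
          have h6' : v^6 ≤ 64 * u^6 := by nlinarith [h6]
          rw [show (64 : ℝ) * (v^6)⁻¹ = 64 / v^6 by ring, inv_eq_one_div,
            div_le_div_iff₀ (by positivity) (by positivity)]
          linarith
        calc C * (r u v) * (u^6)⁻¹ ≤ C * ((v - u)/2) * (64 * (v^6)⁻¹) :=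
              mul_le_mul (mul_le_mul_of_nonneg_left hR.2 hC) h64 (by positivity)
                (mul_nonneg hC (by linarith))
          _ = 32 * C * (v^6)⁻¹ * (v - u) := by ring
    have hI1 : (∫ u' in (1:ℝ)..(v/2), m u' v / (r u' v) ^ 2)
        ≤ ∫ u in (1:ℝ)..(v/2), 36 * C * v⁻¹ * v⁻¹ * (u^3)⁻¹ :=
      intervalIntegral.integral_mono_on h1v2 hsub1 hbd1int hpt1
    have hI2 : (∫ u' in (v/2)..v, m u' v / (r u' v) ^ 2)
        ≤ ∫ u in (v/2)..v, 32 * C * (v^6)⁻¹ * (v - u) :=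
      intervalIntegral.integral_mono_on hv2v hsub2 hbd2int hpt2
    -- compute the bound integrals
    have hJ1 : (∫ u in (1:ℝ)..(v/2), 36 * C * v⁻¹ * v⁻¹ * (u^3)⁻¹)
        ≤ 18 * C * v⁻¹ * v⁻¹ := by
      have hcalc : (∫ u in (1:ℝ)..(v/2), (u^3)⁻¹) = ((v/2)^(-2:ℤ) - 1)/(-2) := by
        rw [show (fun u : ℝ => (u^3)⁻¹) = (fun u : ℝ => u^(-3:ℤ)) from
          funext (fun u => by rw [zpow_neg]; norm_cast)]
        rw [integral_zpow (Or.inr ⟨by norm_num, by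
          rw [Set.uIcc_of_le h1v2]
          simp only [Set.mem_Icc, not_and]
          intro h; linarith⟩)]
        norm_num
      rw [intervalIntegral.integral_const_mul, hcalc]
      have hpow : (0:ℝ) ≤ (v/2)^(-2:ℤ) := by positivity
      have : ((v/2)^(-2:ℤ) - 1)/(-2) ≤ 1/2 := by linarith
      calc 36 * C * v⁻¹ * v⁻¹ * (((v/2)^(-2:ℤ) - 1)/(-2))
          ≤ 36 * C * v⁻¹ * v⁻¹ * (1/2) := by
            apply mul_le_mul_of_nonneg_left this (by positivity)
        _ = 18 * C * v⁻¹ * v⁻¹ := by ring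
    have hJ2 : (∫ u in (v/2)..v, 32 * C * (v^6)⁻¹ * (v - u)) ≤ 4 * C * v⁻¹ * v⁻¹ := by
      have hcalc : (∫ u in (v/2)..v, (v - u)) = v^2/8 := by
        rw [intervalIntegral.integral_sub intervalIntegrable_const intervalIntegrable_id,
          intervalIntegral.integral_const, integral_id]
        simp; ring
      have : (∫ u in (v/2)..v, 32 * C * (v^6)⁻¹ * (v - u))
          = 32 * C * (v^6)⁻¹ * (v^2/8) := by
        rw [intervalIntegral.integral_const_mul, hcalc]
      rw [this]
      have hvne : v ≠ 0 := ne_of_gt hv0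
      have heq : 32 * C * (v^6)⁻¹ * (v^2/8) = 4 * C * v⁻¹ * v⁻¹ * (v⁻¹ * v⁻¹) := by
        field_simp; ring
      rw [heq]
      have hvi : v⁻¹ ≤ 1 := by
        rw [inv_le_one_iff₀]; right; linarith
      have hvi0 : 0 ≤ v⁻¹ := by positivity
      have h4 : 0 ≤ 4 * C * v⁻¹ * v⁻¹ := by positivity
      have htt : v⁻¹ * v⁻¹ ≤ 1 := by nlinarith
      calc 4 * C * v⁻¹ * v⁻¹ * (v⁻¹ * v⁻¹) ≤ 4 * C * v⁻¹ * v⁻¹ * 1 :=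
            mul_le_mul_of_nonneg_left htt h4
        _ = 4 * C * v⁻¹ * v⁻¹ := mul_one _
    -- combine
    have htot : (∫ u' in (1:ℝ)..(v/2), m u' v / (r u' v) ^ 2)
        + (∫ u' in (v/2)..v, m u' v / (r u' v) ^ 2) ≤ 22 * C * v⁻¹ * v⁻¹ := by
      calc _ ≤ (18 * C * v⁻¹ * v⁻¹) + (4 * C * v⁻¹ * v⁻¹) := by
            exact add_le_add (hI1.trans hJ1) (hI2.trans hJ2)
        _ = 22 * C * v⁻¹ * v⁻¹ := by ring
    refine lt_of_le_of_lt htot ?_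
    have hvv : v * v⁻¹ = 1 := mul_inv_cancel₀ (ne_of_gt hv0)
    have hvi0 : 0 < v⁻¹ := by positivity
    calc 22 * C * v⁻¹ * v⁻¹ < (ε * v) * v⁻¹ * v⁻¹ := by
          have h' := mul_lt_mul_of_pos_right hεv (mul_pos hvi0 hvi0)
          nlinarith [h']
      _ = ε * v⁻¹ := by field_simp
  · rw [intervalIntegral.integral_undef hint]
    exact hεpos
end

section
/- Suppose λ, ν are C¹ on {1 ≤ u ≤ v} with λ(u,u) = −ν(u,u), |∂_u λ(u,v)| ≤ C (1+|u|)^{-1}(1+v)^{-1}, and |ν(u,u) + 1/2| ≤ C (1+|u|)^{-1}. Then |λ(u,v) − 1/2| ≤ C' ( (1+v)^{-1} + log(1+v)/(1+v) ) for all (u,v) with 1 ≤ u ≤ v; in particular lim_{v→∞} λ(u,v) = 1/2 for each u. -/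
open Filter Topology Set

/-! Integrating `∂_u λ` from the axis point `(v, v)` back to `(u, v)` costs at most
`C (1+v)⁻¹ log(1+v)`, because `∫ (1+s)⁻¹ ds` is a logarithm; at the axis itself
`λ = -ν` is within `C (1+v)⁻¹` of `1/2`. Both terms vanish as `v → ∞`. -/

theorem norm_sub_le_sub_of_norm_deriv_le {E : Type*} [NormedAddCommGroup E] [NormedSpace ℝ E]
    {f f' : ℝ → E} {G g : ℝ → ℝ} {a b : ℝ} (hab : a ≤ b)
    (hf : ∀ s ∈ Icc a b, HasDerivAt f (f' s) s) (hG : ∀ s ∈ Icc a b, HasDerivAt G (g s) s)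
    (bound : ∀ s ∈ Icc a b, ‖f' s‖ ≤ g s) :
    ‖f b - f a‖ ≤ G b - G a := by
  refine image_norm_le_of_norm_deriv_right_le_deriv_boundary' (f := fun s => f s - f a)
    (B := fun s => G s - G a) ?_ (fun s hs => ?_) (by simp) ?_ (fun s hs => ?_)
    (fun s hs => bound s (Ico_subset_Icc_self hs)) (right_mem_Icc.2 hab)
  · exact fun s hs => ((hf s hs).continuousAt.continuousWithinAt).sub continuousWithinAt_const
  · exact ((hf s (Ico_subset_Icc_self hs)).sub_const (f a)).hasDerivWithinAt
  · exact fun s hs => ((hG s hs).continuousAt.continuousWithinAt).sub continuousWithinAt_const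
  · exact ((hG s (Ico_subset_Icc_self hs)).sub_const (G a)).hasDerivWithinAt

theorem abs_sub_le_mul_log_of_abs_deriv_le {f f' : ℝ → ℝ} {K a b : ℝ} (ha : -1 < a)
    (hab : a ≤ b) (hf : ∀ s ∈ Icc a b, HasDerivAt f (f' s) s)
    (bound : ∀ s ∈ Icc a b, |f' s| ≤ K * (1 + s)⁻¹) :
    |f b - f a| ≤ K * (Real.log (1 + b) - Real.log (1 + a)) := by
  have hlog : ∀ s ∈ Icc a b, HasDerivAt (fun t => K * Real.log (1 + t)) (K * (1 + s)⁻¹) s := by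
    intro s hs
    have hs' : 1 + s ≠ 0 := by linarith [hs.1]
    simpa using (((hasDerivAt_id s).const_add 1).log hs').const_mul K
  simpa [mul_sub] using norm_sub_le_sub_of_norm_deriv_le hab hf hlog bound

theorem tendsto_inv_add_log_div_atTop :
    Tendsto (fun v : ℝ => (1 + v)⁻¹ + Real.log (1 + v) / (1 + v)) atTop (𝓝 0) := by
  have h : Tendsto (fun v : ℝ => 1 + v) atTop atTop := tendsto_atTop_add_const_left _ 1 tendsto_id
  simpa using h.inv_tendsto_atTop.add (Real.isLittleO_log_id_atTop.tendsto_div_nhds_zero.comp h)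

theorem abs_sub_half_le_of_axis {C : ℝ} (hC : 0 ≤ C) {lam nu dlam : ℝ → ℝ → ℝ}
    (haxis : ∀ u : ℝ, 1 ≤ u → lam u u = - nu u u)
    (hderiv : ∀ u v : ℝ, 1 ≤ u → u ≤ v → HasDerivAt (fun u' => lam u' v) (dlam u v) u)
    (hdb : ∀ u v : ℝ, 1 ≤ u → u ≤ v → |dlam u v| ≤ C * (1 + |u|)⁻¹ * (1 + v)⁻¹)
    (hnu : ∀ u : ℝ, 1 ≤ u → |nu u u + 1/2| ≤ C * (1 + |u|)⁻¹)
    {u v : ℝ} (hu : 1 ≤ u) (huv : u ≤ v) :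
    |lam u v - 1/2| ≤ C * ((1 + v)⁻¹ + Real.log (1 + v) / (1 + v)) := by
  have hv : 1 ≤ v := hu.trans huv
  have haxis_bound : |lam v v - 1/2| ≤ C * (1 + v)⁻¹ := by
    have h := hnu v hv
    rw [abs_of_nonneg (by linarith : (0 : ℝ) ≤ v)] at h
    rwa [haxis v hv, ← abs_neg, neg_sub, sub_neg_eq_add, add_comm]
  have hintegrated : |lam v v - lam u v| ≤
      C * (1 + v)⁻¹ * (Real.log (1 + v) - Real.log (1 + u)) := by
    refine abs_sub_le_mul_log_of_abs_deriv_le (f := fun u' => lam u' v) (by linarith) huv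
      (fun s hs => hderiv s v (hu.trans hs.1) hs.2) (fun s hs => ?_)
    have h := hdb s v (hu.trans hs.1) hs.2
    rwa [abs_of_nonneg (by linarith [hs.1] : (0 : ℝ) ≤ s), mul_right_comm] at h
  have hlog_u : 0 ≤ Real.log (1 + u) := Real.log_nonneg (by linarith)
  have hCv : 0 ≤ C * (1 + v)⁻¹ := by positivity
  calc |lam u v - 1/2| ≤ |lam v v - lam u v| + |lam v v - 1/2| := by
        rw [abs_sub_comm (lam v v)]; exact abs_sub_le _ _ _
    _ ≤ C * (1 + v)⁻¹ * Real.log (1 + v) + C * (1 + v)⁻¹ := by nlinarith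
    _ = C * ((1 + v)⁻¹ + Real.log (1 + v) / (1 + v)) := by ring

/-- If `λ(u,u) = −ν(u,u)`, `|∂_u λ| ≤ C(1+|u|)⁻¹(1+v)⁻¹` and
`|ν(u,u) + 1/2| ≤ C(1+|u|)⁻¹`, then
`|λ(u,v) − 1/2| ≤ C'((1+v)⁻¹ + log(1+v)/(1+v))` on `{1 ≤ u ≤ v}`;
in particular `λ(u,v) → 1/2` as `v → ∞` for each `u`. -/
theorem lambda_limit (C : ℝ) (hC : 0 ≤ C) (lam nu dlam : ℝ → ℝ → ℝ)
    (haxis : ∀ u : ℝ, 1 ≤ u → lam u u = - nu u u)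
    (hderiv : ∀ u v : ℝ, 1 ≤ u → u ≤ v →
      HasDerivAt (fun u' => lam u' v) (dlam u v) u)
    (hdb : ∀ u v : ℝ, 1 ≤ u → u ≤ v →
      |dlam u v| ≤ C * (1 + |u|)⁻¹ * (1 + v)⁻¹)
    (hnu : ∀ u : ℝ, 1 ≤ u → |nu u u + 1/2| ≤ C * (1 + |u|)⁻¹) :
    ∃ C' > 0,
      (∀ u v : ℝ, 1 ≤ u → u ≤ v →
        |lam u v - 1/2| ≤ C' * ((1 + v)⁻¹ + Real.log (1 + v) / (1 + v))) ∧
      ∀ u : ℝ, 1 ≤ u → Tendsto (fun v => lam u v) atTop (𝓝 (1/2)) := by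
  have hbound := fun u v (hu : 1 ≤ u) (huv : u ≤ v) =>
    abs_sub_half_le_of_axis hC haxis hderiv hdb hnu hu huv
  refine ⟨C + 1, by linarith, fun u v hu huv => (hbound u v hu huv).trans ?_, fun u hu => ?_⟩
  · have hv : 0 < 1 + v := by linarith
    have hlog_v : 0 ≤ Real.log (1 + v) := Real.log_nonneg (by linarith)
    exact mul_le_mul_of_nonneg_right (by linarith) (by positivity)
  · have hC0 : Tendsto (fun v : ℝ => C * ((1 + v)⁻¹ + Real.log (1 + v) / (1 + v)))
        atTop (𝓝 0) := by simpa using tendsto_inv_add_log_div_atTop.const_mul C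
    refine tendsto_sub_nhds_zero_iff.1 (squeeze_zero_norm' ?_ hC0)
    filter_upwards [eventually_ge_atTop u] with v hv
    exact hbound u v hu hv
end
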